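/- Let X ∈ ℝ^{m×p}, W ∈ ℝ^{m×q}, and L*, S*, D*, L̂, Ŝ, D̂ ∈ ℝ^{p×q} with Y = X(L* + S* + D*) + W. Assume: (i) ‖D*‖_0 ≤ e and ‖D̂‖_0 ≤ e; (ii) ‖Y − X(L̂ + Ŝ + D̂)‖_F² ≤ ‖Y − X(L̂ + Ŝ + D*)‖_F² (optimality of D̂); (iii) the smallest eigenvalue of XᵀX is at least κ > 0. Then ‖D̂ − D*‖_F² ≤ ( 16·e·‖XᵀW‖_max² + 8·‖XᵀX(L* − L̂ + S* − Ŝ)‖_F² ) / κ². -/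
import Mathlib


open Matrix BigOperators
open Finset

/-- Frobenius norm of a real matrix. -/
noncomputable def frobNorm {p q : ℕ} (M : Matrix (Fin p) (Fin q) ℝ) : ℝ :=
  Real.sqrt (∑ i, ∑ j, (M i j) ^ 2)

/-- ℓ2 operator norm (largest singular value) of a real matrix. -/
noncomputable def opNorm {p q : ℕ} (M : Matrix (Fin p) (Fin q) ℝ) : ℝ :=
  ‖LinearMap.toContinuousLinearMap (Matrix.toEuclideanLin M)‖

/-- Maximum absolute entry of a real matrix. -/
noncomputable def maxNorm {p q : ℕ} (M : Matrix (Fin p) (Fin q) ℝ) : ℝ :=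
  ⨆ i, ⨆ j, |M i j|

/-- Number of nonzero entries of a matrix (the "ℓ0 norm"). -/
noncomputable def sparsity {p q : ℕ} (M : Matrix (Fin p) (Fin q) ℝ) : ℕ :=
  {ij : Fin p × Fin q | M ij.1 ij.2 ≠ 0}.ncard

/-- Euclidean norm of a vector. -/
noncomputable def e2norm {n : ℕ} (v : Fin n → ℝ) : ℝ :=
  Real.sqrt (∑ i, (v i) ^ 2)

/-- Supremum norm of a vector. -/
noncomputable def supNorm {n : ℕ} (v : Fin n → ℝ) : ℝ :=
  ⨆ i, |v i|

/-- The statement that every eigenvalue of the symmetric matrix `A` is at least `κ`,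
expressed through the quadratic form: `vᵀ A v ≥ κ ‖v‖₂²` for every `v`. -/
def minEigBound {n : ℕ} (A : Matrix (Fin n) (Fin n) ℝ) (κ : ℝ) : Prop :=
  ∀ v : Fin n → ℝ, κ * (v ⬝ᵥ v) ≤ v ⬝ᵥ (A *ᵥ v)

private lemma ip_trace {a b : ℕ} (A B : Matrix (Fin a) (Fin b) ℝ) :
    ∑ i, ∑ j, A i j * B i j = Matrix.trace (Aᵀ * B) := by
  rw [Matrix.trace]
  simp only [Matrix.diag, Matrix.mul_apply, Matrix.transpose_apply]
  exact Finset.sum_comm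

private lemma adj {m p q : ℕ} (X : Matrix (Fin m) (Fin p) ℝ)
    (A : Matrix (Fin p) (Fin q) ℝ) (B : Matrix (Fin m) (Fin q) ℝ) :
    ∑ i, ∑ j, (X * A) i j * B i j = ∑ k, ∑ j, A k j * (Xᵀ * B) k j := by
  rw [ip_trace, ip_trace, Matrix.transpose_mul, Matrix.mul_assoc]

private lemma ip_comm {a b : ℕ} (A B : Matrix (Fin a) (Fin b) ℝ) :
    ∑ i, ∑ j, A i j * B i j = ∑ i, ∑ j, B i j * A i j := by
  simp [mul_comm]

private lemma colquad {m p : ℕ} (X : Matrix (Fin m) (Fin p) ℝ) (v : Fin p → ℝ) :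
    v ⬝ᵥ ((Xᵀ * X) *ᵥ v) = ∑ i, (X *ᵥ v) i ^ 2 := by
  rw [← Matrix.mulVec_mulVec, Matrix.dotProduct_mulVec, Matrix.vecMul_transpose]
  simp [dotProduct, sq]

private lemma sub_expand {a b : ℕ} (U V : Matrix (Fin a) (Fin b) ℝ) :
    ∑ i, ∑ j, (U - V) i j ^ 2
      = (∑ i, ∑ j, U i j ^ 2) - 2 * (∑ i, ∑ j, U i j * V i j) + ∑ i, ∑ j, V i j ^ 2 := by
  simp only [Matrix.sub_apply, sub_sq, Finset.sum_add_distrib, Finset.sum_sub_distrib,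
    Finset.mul_sum]
  ring_nf

private lemma frob_sq {p q : ℕ} (M : Matrix (Fin p) (Fin q) ℝ) :
    frobNorm M ^ 2 = ∑ i, ∑ j, M i j ^ 2 :=
  Real.sq_sqrt (by positivity)

private lemma maxNorm_nonneg {p q : ℕ} (M : Matrix (Fin p) (Fin q) ℝ) : 0 ≤ maxNorm M :=
  Real.iSup_nonneg fun _ => Real.iSup_nonneg fun _ => abs_nonneg _

private lemma abs_le_maxNorm {p q : ℕ} (M : Matrix (Fin p) (Fin q) ℝ) (i : Fin p) (j : Fin q) :
    |M i j| ≤ maxNorm M := by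
  have h1 : |M i j| ≤ ⨆ j, |M i j| :=
    le_ciSup (f := fun j => |M i j|) (Set.Finite.bddAbove (Set.finite_range _)) j
  exact h1.trans (le_ciSup (f := fun i => ⨆ j, |M i j|)
    (Set.Finite.bddAbove (Set.finite_range _)) i)

private lemma sparsity_eq {p q : ℕ} (M : Matrix (Fin p) (Fin q) ℝ) :
    sparsity M = (Finset.univ.filter (fun ij : Fin p × Fin q => M ij.1 ij.2 ≠ 0)).card := by
  rw [sparsity, Set.ncard_eq_toFinset_card']
  congr 1
  ext ij
  simp


/-- Deterministic core of the transfer estimation error lemma: the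
sparsity-constrained least-squares correction `D̂` of the sparse difference `D*` satisfies
`‖D̂ − D*‖_F² ≤ (16e‖XᵀW‖_max² + 8‖XᵀX(L*−L̂+S*−Ŝ)‖_F²)/κ²`. -/
theorem transfer_estimation_error {m p q : ℕ}
    (X : Matrix (Fin m) (Fin p) ℝ) (W : Matrix (Fin m) (Fin q) ℝ)
    (Lstar Sstar Dstar Lhat Shat Dhat : Matrix (Fin p) (Fin q) ℝ)
    (Y : Matrix (Fin m) (Fin q) ℝ)
    (hY : Y = X * (Lstar + Sstar + Dstar) + W)
    (e : ℕ)
    (hDstar : sparsity Dstar ≤ e) (hDhat : sparsity Dhat ≤ e)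
    (hopt : frobNorm (Y - X * (Lhat + Shat + Dhat)) ^ 2 ≤
      frobNorm (Y - X * (Lhat + Shat + Dstar)) ^ 2)
    (κ : ℝ) (hκ : 0 < κ)
    (hmin : minEigBound (Xᵀ * X) κ) :
    frobNorm (Dhat - Dstar) ^ 2 ≤
      (16 * e * maxNorm (Xᵀ * W) ^ 2
        + 8 * frobNorm (Xᵀ * X * (Lstar - Lhat + (Sstar - Shat))) ^ 2) / κ ^ 2 := by
  set Δ := Dhat - Dstar with hΔdef
  set E := Lstar - Lhat + (Sstar - Shat) with hEdef
  set R := X * E + W with hRdef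
  set G := Xᵀ * X * E with hGdef
  set N := Xᵀ * W with hNdef
  set M := maxNorm N with hMdef
  -- residual identities
  have key1 : Y - X * (Lhat + Shat + Dstar) = R := by
    rw [hY, hRdef, hEdef]
    have h : X * (Lstar + Sstar + Dstar) - X * (Lhat + Shat + Dstar)
        = X * (Lstar - Lhat + (Sstar - Shat)) := by
      rw [← Matrix.mul_sub]; congr 1; abel
    calc X * (Lstar + Sstar + Dstar) + W - X * (Lhat + Shat + Dstar)
        = (X * (Lstar + Sstar + Dstar) - X * (Lhat + Shat + Dstar)) + W := by abel
      _ = X * (Lstar - Lhat + (Sstar - Shat)) + W := by rw [h]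
  have key2 : Y - X * (Lhat + Shat + Dhat) = R - X * Δ := by
    rw [hY, hRdef, hEdef, hΔdef]
    have h : X * (Lstar + Sstar + Dstar) - X * (Lhat + Shat + Dhat)
        = X * (Lstar - Lhat + (Sstar - Shat)) - X * (Dhat - Dstar) := by
      rw [← Matrix.mul_sub, ← Matrix.mul_sub]; congr 1; abel
    calc X * (Lstar + Sstar + Dstar) + W - X * (Lhat + Shat + Dhat)
        = (X * (Lstar + Sstar + Dstar) - X * (Lhat + Shat + Dhat)) + W := by abel
      _ = X * (Lstar - Lhat + (Sstar - Shat)) - X * (Dhat - Dstar) + W := by rw [h]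
      _ = X * (Lstar - Lhat + (Sstar - Shat)) + W - X * (Dhat - Dstar) := by abel
  -- basic inequality
  have hbasic : ∑ i, ∑ j, (X * Δ) i j ^ 2 ≤ 2 * ∑ i, ∑ j, R i j * (X * Δ) i j := by
    have h := hopt
    rw [key1, key2, frob_sq, frob_sq, sub_expand] at h
    linarith
  -- decompose the cross term
  have hcross : ∑ i, ∑ j, R i j * (X * Δ) i j
      = (∑ k, ∑ j, Δ k j * G k j) + ∑ k, ∑ j, Δ k j * N k j := by
    have h1 : ∑ i, ∑ j, R i j * (X * Δ) i j
        = (∑ i, ∑ j, (X * E) i j * (X * Δ) i j) + ∑ i, ∑ j, W i j * (X * Δ) i j := by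
      simp [hRdef, Matrix.add_apply, add_mul, Finset.sum_add_distrib]
    rw [h1]
    congr 1
    · rw [ip_comm, adj X Δ (X * E)]
      simp only [hGdef, Matrix.mul_assoc]
    · rw [ip_comm, adj X Δ W, hNdef]
  -- eigenvalue lower bound
  have hlower : κ * ∑ i, ∑ j, Δ i j ^ 2 ≤ ∑ i, ∑ j, (X * Δ) i j ^ 2 := by
    rw [Finset.sum_comm (s := Finset.univ) (t := Finset.univ)
      (f := fun i j => (X * Δ) i j ^ 2)]
    rw [Finset.sum_comm (s := Finset.univ) (t := Finset.univ)
      (f := fun i j => Δ i j ^ 2), Finset.mul_sum]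
    apply Finset.sum_le_sum
    intro j _
    have h := hmin (fun k => Δ k j)
    have hdot : (fun k => Δ k j) ⬝ᵥ (fun k => Δ k j) = ∑ k, Δ k j ^ 2 := by
      simp [dotProduct, sq]
    have hq : (fun k => Δ k j) ⬝ᵥ ((Xᵀ * X) *ᵥ fun k => Δ k j)
        = ∑ i, (X * Δ) i j ^ 2 := by
      rw [colquad]
      exact Finset.sum_congr rfl fun i _ => by
        simp [Matrix.mulVec, Matrix.mul_apply, dotProduct]
    rw [hdot, hq] at h
    exact h
  -- Cauchy–Schwarz for the G term
  set t := frobNorm Δ with htdef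
  set b := frobNorm G with hbdef
  have ht0 : 0 ≤ t := Real.sqrt_nonneg _
  have hb0 : 0 ≤ b := Real.sqrt_nonneg _
  have hM0 : 0 ≤ M := maxNorm_nonneg _
  have ht2 : ∑ i, ∑ j, Δ i j ^ 2 = t ^ 2 := (frob_sq Δ).symm
  have hb2 : ∑ i, ∑ j, G i j ^ 2 = b ^ 2 := (frob_sq G).symm
  have hCS : ∑ k, ∑ j, Δ k j * G k j ≤ t * b := by
    have h := Real.sum_mul_le_sqrt_mul_sqrt (Finset.univ : Finset (Fin p × Fin q))
      (fun ij => Δ ij.1 ij.2) (fun ij => G ij.1 ij.2)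
    simp only [Fintype.sum_prod_type] at h
    exact h.trans_eq (by rw [htdef, hbdef, frobNorm, frobNorm])
  -- sparse term
  set T := Finset.univ.filter (fun ij : Fin p × Fin q => Δ ij.1 ij.2 ≠ 0) with hTdef
  have hTcard : (T.card : ℝ) ≤ 2 * e := by
    have hsub : T ⊆ (Finset.univ.filter (fun ij : Fin p × Fin q => Dhat ij.1 ij.2 ≠ 0))
        ∪ (Finset.univ.filter (fun ij : Fin p × Fin q => Dstar ij.1 ij.2 ≠ 0)) := by
      intro ij hij
      simp only [hTdef, Finset.mem_filter, Finset.mem_univ, true_and] at hij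
      simp only [Finset.mem_union, Finset.mem_filter, Finset.mem_univ, true_and]
      by_contra hc
      push_neg at hc
      apply hij
      simp [hΔdef, hc.1, hc.2]
    have h1 := (Finset.card_le_card hsub).trans (Finset.card_union_le _ _)
    rw [← sparsity_eq Dhat, ← sparsity_eq Dstar] at h1
    have h2 : T.card ≤ 2 * e := h1.trans (by omega)
    exact_mod_cast h2
  have hl1 : ∑ k, ∑ j, Δ k j * N k j ≤ Real.sqrt (2 * e) * M * t := by
    have step1 : ∑ k, ∑ j, Δ k j * N k j ≤ ∑ k, ∑ j, |Δ k j| * M := by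
      refine Finset.sum_le_sum fun k _ => Finset.sum_le_sum fun j _ => ?_
      calc Δ k j * N k j ≤ |Δ k j * N k j| := le_abs_self _
        _ = |Δ k j| * |N k j| := abs_mul _ _
        _ ≤ |Δ k j| * M :=
            mul_le_mul_of_nonneg_left (abs_le_maxNorm N k j) (abs_nonneg _)
    have hsum_eq : ∑ ij ∈ T, |Δ ij.1 ij.2| = ∑ k, ∑ j, |Δ k j| := by
      have h0 : ∑ ij ∈ T, |Δ ij.1 ij.2| = ∑ ij : Fin p × Fin q, |Δ ij.1 ij.2| := by
        apply Finset.sum_subset (Finset.filter_subset _ _)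
        intro ij _ hij
        simp only [hTdef, Finset.mem_filter, Finset.mem_univ, true_and, not_not] at hij
        simp [hij]
      rw [h0, Fintype.sum_prod_type]
    have step2 : ∑ k, ∑ j, |Δ k j| * M = M * ∑ ij ∈ T, |Δ ij.1 ij.2| := by
      rw [hsum_eq, Finset.mul_sum]
      refine Finset.sum_congr rfl fun k _ => ?_
      rw [Finset.mul_sum]
      exact Finset.sum_congr rfl fun j _ => mul_comm _ _
    have step3 : ∑ ij ∈ T, |Δ ij.1 ij.2| ≤ Real.sqrt (2 * e) * t := by
      have hsq : (∑ ij ∈ T, |Δ ij.1 ij.2|) ^ 2 ≤ (2 * e) * t ^ 2 := by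
        have h1 := sq_sum_le_card_mul_sum_sq (s := T) (f := fun ij => |Δ ij.1 ij.2|)
        have h2 : ∑ ij ∈ T, |Δ ij.1 ij.2| ^ 2 ≤ t ^ 2 := by
          have e1 : ∑ ij ∈ T, |Δ ij.1 ij.2| ^ 2 = ∑ ij ∈ T, Δ ij.1 ij.2 ^ 2 :=
            Finset.sum_congr rfl fun ij _ => sq_abs _
          have e2 : ∑ ij ∈ T, Δ ij.1 ij.2 ^ 2 ≤ ∑ ij : Fin p × Fin q, Δ ij.1 ij.2 ^ 2 :=
            Finset.sum_le_sum_of_subset_of_nonneg (Finset.filter_subset _ _)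
              fun ij _ _ => sq_nonneg _
          have e3 : ∑ ij : Fin p × Fin q, Δ ij.1 ij.2 ^ 2 = t ^ 2 := by
            rw [Fintype.sum_prod_type]; exact ht2
          rw [e1]; exact e2.trans_eq e3
        calc (∑ ij ∈ T, |Δ ij.1 ij.2|) ^ 2 ≤ (T.card : ℝ) * ∑ ij ∈ T, |Δ ij.1 ij.2| ^ 2 := by
              exact_mod_cast h1
          _ ≤ (2 * e) * t ^ 2 := by
              apply mul_le_mul hTcard h2 (Finset.sum_nonneg fun ij _ => sq_nonneg _)
              positivity
      have hnn : 0 ≤ ∑ ij ∈ T, |Δ ij.1 ij.2| := Finset.sum_nonneg fun ij _ => abs_nonneg _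
      calc ∑ ij ∈ T, |Δ ij.1 ij.2| = Real.sqrt ((∑ ij ∈ T, |Δ ij.1 ij.2|) ^ 2) :=
            (Real.sqrt_sq hnn).symm
        _ ≤ Real.sqrt ((2 * e) * t ^ 2) := Real.sqrt_le_sqrt hsq
        _ = Real.sqrt (2 * e) * t := by
            rw [Real.sqrt_mul (by positivity), Real.sqrt_sq ht0]
    calc ∑ k, ∑ j, Δ k j * N k j ≤ M * ∑ ij ∈ T, |Δ ij.1 ij.2| := step1.trans_eq step2
      _ ≤ M * (Real.sqrt (2 * e) * t) := mul_le_mul_of_nonneg_left step3 hM0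
      _ = Real.sqrt (2 * e) * M * t := by ring
  -- assemble
  set a := Real.sqrt (2 * e) * M with hadef
  have ha0 : 0 ≤ a := mul_nonneg (Real.sqrt_nonneg _) hM0
  have ha2 : a ^ 2 = 2 * e * M ^ 2 := by
    rw [hadef, mul_pow, Real.sq_sqrt (by positivity)]
  have hmain : κ * t ^ 2 ≤ 2 * (t * b + a * t) := by
    calc κ * t ^ 2 = κ * ∑ i, ∑ j, Δ i j ^ 2 := by rw [ht2]
      _ ≤ ∑ i, ∑ j, (X * Δ) i j ^ 2 := hlower
      _ ≤ 2 * ∑ i, ∑ j, R i j * (X * Δ) i j := hbasic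
      _ = 2 * ((∑ k, ∑ j, Δ k j * G k j) + ∑ k, ∑ j, Δ k j * N k j) := by rw [hcross]
      _ ≤ 2 * (t * b + a * t) := by
          have h := add_le_add hCS hl1
          linarith
  clear hopt hmin hbasic hcross hlower hCS hl1 key1 key2 hTcard ht2 hb2 hY hDstar hDhat
  show t ^ 2 ≤ (16 * e * M ^ 2 + 8 * b ^ 2) / κ ^ 2
  rw [le_div_iff₀ (by positivity)]
  have hgoal : 16 * (e : ℝ) * M ^ 2 + 8 * b ^ 2 = 8 * a ^ 2 + 8 * b ^ 2 := by
    rw [ha2]; ring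
  rw [hgoal]
  rcases ht0.eq_or_lt with h0 | htpos
  · rw [← h0]; simp; positivity
  · have hkt : κ * t ≤ 2 * (a + b) := by
      have h' : (κ * t) * t ≤ (2 * (a + b)) * t := by linarith [hmain]
      exact le_of_mul_le_mul_right h' htpos
    have hkt0 : 0 ≤ κ * t := by positivity
    have hsq := mul_le_mul hkt hkt hkt0 (by linarith)
    linarith [hsq, sq_nonneg (a - b)]
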